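/- Let R be a commutative ring, n ≥ 1, and let P denote the 2n×2n block matrix [[Iₙ, 0], [0, Lₙ]]. A 2n×2n matrix M over R is both lower unitriangular (lower triangular with all diagonal entries 1) and Ω̃-symplectic if and only if there exist an upper unitriangular n×n matrix A and a symmetric n×n matrix Z over R such that M = P·M⁻(A,Z)·P. -/

import Mathlib

/-! Conjugation by the involution `P` carries `Ω` to `Ω̃` and reverses the order of the last `n`
coordinates, so `M` is lower unitriangular and `Ω̃`-symplectic iff `N = P M P` is `Ω`-symplectic
of the block form `[[X, 0], [Y, W]]` with `X` lower and `W` upper unitriangular. For such `N`,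
being `Ω`-symplectic means `Xᵀ Y` symmetric and `Xᵀ W = 1`; then `X = W⁻ᵀ` and
`N = M⁻(W, Y Wᵀ)`, where `Y Wᵀ = W (Xᵀ Y) Wᵀ` is symmetric. -/

open Matrix

/-- `Lₙ`: the `n × n` matrix with `1` along the skew-diagonal
(`(Lₙ)ᵢⱼ = 1` iff `i + j = n + 1` in 1-based indexing). -/
def Lmat {R : Type*} [CommRing R] (n : ℕ) : Matrix (Fin n) (Fin n) R :=
  Matrix.of fun i j : Fin n => if (i : ℕ) + (j : ℕ) = n - 1 then 1 else 0

/-- The symplectic form `Ω̃ = [[0, Lₙ], [−Lₙ, 0]]`. -/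
def OmegaTilde {R : Type*} [CommRing R] (n : ℕ) :
    Matrix (Fin n ⊕ Fin n) (Fin n ⊕ Fin n) R :=
  Matrix.fromBlocks 0 (Lmat n) (-(Lmat n)) 0

/-- The block matrix `P = [[Iₙ, 0], [0, Lₙ]]`. -/
def Pmat {R : Type*} [CommRing R] (n : ℕ) :
    Matrix (Fin n ⊕ Fin n) (Fin n ⊕ Fin n) R :=
  Matrix.fromBlocks 1 0 0 (Lmat n)

/-- `M⁻(A,Z) = [[Iₙ,0],[Z,Iₙ]]·[[A⁻ᵀ,0],[0,A]]`. -/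
noncomputable def MnegAZ {R : Type*} [CommRing R] {n : ℕ}
    (A Z : Matrix (Fin n) (Fin n) R) :
    Matrix (Fin n ⊕ Fin n) (Fin n ⊕ Fin n) R :=
  Matrix.fromBlocks 1 0 Z 1 * Matrix.fromBlocks (Aᵀ)⁻¹ 0 0 A

/-- Upper triangular with all diagonal entries `1` (for `n × n` matrices). -/
def IsUpperUnitriangular {R : Type*} [CommRing R] {n : ℕ}
    (A : Matrix (Fin n) (Fin n) R) : Prop :=
  (∀ i, A i i = 1) ∧ ∀ i j : Fin n, j < i → A i j = 0

/-- The position (0-based) of an index of a `2n × 2n` matrix written in block form. -/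
def idx {n : ℕ} : Fin n ⊕ Fin n → ℕ := Sum.elim (fun i => (i : ℕ)) fun i => n + (i : ℕ)

/-- Lower triangular with all diagonal entries `1` (for `2n × 2n` matrices in block form). -/
def IsLowerUnitriangular2n {R : Type*} [CommRing R] {n : ℕ}
    (M : Matrix (Fin n ⊕ Fin n) (Fin n ⊕ Fin n) R) : Prop :=
  (∀ i, M i i = 1) ∧ ∀ i j : Fin n ⊕ Fin n, idx i < idx j → M i j = 0

section Reversal

variable {R : Type*} [CommRing R] {n : ℕ}

lemma Lmat_eq_one_submatrix : Lmat n = (1 : Matrix (Fin n) (Fin n) R).submatrix Fin.rev id := by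
  ext i j
  simp only [Lmat, of_apply, submatrix_apply, id, one_apply, Fin.ext_iff, Fin.val_rev]
  congr 1
  simp only [eq_iff_iff]
  omega

lemma Lmat_mul (X : Matrix (Fin n) (Fin n) R) : Lmat n * X = X.submatrix Fin.rev id := by
  ext i j
  simp [Lmat_eq_one_submatrix, mul_apply, one_apply]

lemma mul_Lmat (X : Matrix (Fin n) (Fin n) R) : X * Lmat n = X.submatrix id Fin.rev := by
  ext i j
  simp [Lmat_eq_one_submatrix, mul_apply, one_apply, Fin.rev_eq_iff]

lemma Lmat_mul_Lmat : (Lmat n : Matrix (Fin n) (Fin n) R) * Lmat n = 1 := by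
  rw [Lmat_mul]
  ext i j
  simp [Lmat_eq_one_submatrix, one_apply]

lemma Lmat_transpose : (Lmat n : Matrix (Fin n) (Fin n) R)ᵀ = Lmat n := by
  ext i j
  simp only [transpose_apply, Lmat, of_apply, add_comm (j : ℕ)]

lemma Lmat_mul_mul_Lmat (X : Matrix (Fin n) (Fin n) R) :
    Lmat n * X * Lmat n = X.submatrix Fin.rev Fin.rev := by
  rw [Lmat_mul, mul_Lmat, submatrix_submatrix]
  rfl

end Reversal

lemma Matrix.IsUpperTriangular.mul_apply_self {m α : Type*} [Fintype m] [LinearOrder m]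
    [NonUnitalNonAssocSemiring α] {A B : Matrix m m α} (hA : A.IsUpperTriangular)
    (hB : B.IsUpperTriangular) (i : m) : (A * B) i i = A i i * B i i := by
  rw [mul_apply]
  refine Finset.sum_eq_single i (fun k _ hk => ?_) (by simp)
  rcases lt_or_gt_of_ne hk with hki | hik
  · rw [hA hki, zero_mul]
  · rw [hB hik, mul_zero]

section Unitriangular

variable {R : Type*} [CommRing R] {n : ℕ} {A : Matrix (Fin n) (Fin n) R}

lemma IsUpperUnitriangular.isUpperTriangular (hA : IsUpperUnitriangular A) :
    A.IsUpperTriangular :=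
  fun i j h => hA.2 i j h

lemma IsUpperUnitriangular.det_eq_one (hA : IsUpperUnitriangular A) : A.det = 1 := by
  simp [det_of_isUpperTriangular hA.isUpperTriangular, hA.1]

lemma IsUpperUnitriangular.isUnit_det (hA : IsUpperUnitriangular A) : IsUnit A.det := by
  simp [hA.det_eq_one]

lemma IsUpperUnitriangular.inv (hA : IsUpperUnitriangular A) : IsUpperUnitriangular A⁻¹ := by
  have : Invertible A := A.invertibleOfIsUnitDet hA.isUnit_det
  have hinv : A⁻¹.IsUpperTriangular := blockTriangular_inv_of_blockTriangular hA.isUpperTriangular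
  refine ⟨fun i => ?_, fun i j h => hinv h⟩
  have := congrFun₂ (nonsing_inv_mul A hA.isUnit_det) i i
  rwa [hinv.mul_apply_self hA.isUpperTriangular, hA.1, mul_one, one_apply_eq]
    at this

lemma isUpperUnitriangular_submatrix_rev_iff :
    IsUpperUnitriangular (A.submatrix Fin.rev Fin.rev) ↔ IsUpperUnitriangular Aᵀ := by
  simp only [IsUpperUnitriangular, submatrix_apply, transpose_apply]
  constructor
  · rintro ⟨hdiag, hlower⟩
    refine ⟨fun i => by simpa using hdiag i.rev, fun i j h => ?_⟩
    simpa using hlower j.rev i.rev (Fin.rev_lt_rev.mpr h)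
  · rintro ⟨hdiag, hlower⟩
    exact ⟨fun i => hdiag i.rev, fun i j h => hlower j.rev i.rev (Fin.rev_lt_rev.mpr h)⟩

end Unitriangular

lemma Matrix.IsSymm.mul_mul_transpose {m ι α : Type*} [Fintype ι] [CommSemiring α]
    {S : Matrix ι ι α} (hS : S.IsSymm) (B : Matrix m ι α) : (B * S * Bᵀ).IsSymm := by
  simp [IsSymm, transpose_mul, hS.eq, Matrix.mul_assoc]

def Omega (ι R : Type*) [DecidableEq ι] [CommRing R] : Matrix (ι ⊕ ι) (ι ⊕ ι) R :=
  fromBlocks 0 1 (-1) 0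

section Symplectic

variable {R : Type*} [CommRing R] {ι : Type*} [Fintype ι] [DecidableEq ι]

lemma fromBlocks_transpose_mul_Omega_mul_fromBlocks (X Y W : Matrix ι ι R) :
    (fromBlocks X 0 Y W)ᵀ * Omega ι R * fromBlocks X 0 Y W =
      fromBlocks (Xᵀ * Y - Yᵀ * X) (Xᵀ * W) (-(Wᵀ * X)) 0 := by
  simp [Omega, fromBlocks_transpose, fromBlocks_multiply, sub_eq_add_neg, add_comm]

lemma fromBlocks_isSymplectic_iff (X Y W : Matrix ι ι R) :
    (fromBlocks X 0 Y W)ᵀ * Omega ι R * fromBlocks X 0 Y W = Omega ι R ↔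
      (Xᵀ * Y).IsSymm ∧ Xᵀ * W = 1 := by
  rw [fromBlocks_transpose_mul_Omega_mul_fromBlocks, Omega, fromBlocks_inj, sub_eq_zero,
    neg_inj, IsSymm, transpose_mul, transpose_transpose, eq_comm (a := Yᵀ * X)]
  refine ⟨fun h => ⟨h.1, h.2.1⟩, fun h => ⟨h.1, h.2, ?_, rfl⟩⟩
  simpa using congrArg transpose h.2

variable {n : ℕ}

lemma MnegAZ_eq_fromBlocks (A Z : Matrix (Fin n) (Fin n) R) :
    MnegAZ A Z = fromBlocks Aᵀ⁻¹ 0 (Z * Aᵀ⁻¹) A := by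
  simp [MnegAZ, fromBlocks_multiply]

lemma MnegAZ_isSymplectic {A Z : Matrix (Fin n) (Fin n) R} (hA : IsUnit A.det) (hZ : Z.IsSymm) :
    (MnegAZ A Z)ᵀ * Omega (Fin n) R * MnegAZ A Z = Omega (Fin n) R := by
  have hAinv : Aᵀ⁻¹ᵀ = A⁻¹ := by rw [← transpose_nonsing_inv, transpose_transpose]
  rw [MnegAZ_eq_fromBlocks, fromBlocks_isSymplectic_iff, hAinv, ← Matrix.mul_assoc,
    ← transpose_nonsing_inv]
  exact ⟨hZ.mul_mul_transpose _, nonsing_inv_mul A hA⟩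

lemma eq_MnegAZ_of_isSymplectic {X Y W : Matrix (Fin n) (Fin n) R}
    (h : (fromBlocks X 0 Y W)ᵀ * Omega (Fin n) R * fromBlocks X 0 Y W = Omega (Fin n) R) :
    (Y * Wᵀ).IsSymm ∧ fromBlocks X 0 Y W = MnegAZ W (Y * Wᵀ) := by
  obtain ⟨hsymm, hXW⟩ := (fromBlocks_isSymplectic_iff X Y W).mp h
  have hWX : W * Xᵀ = 1 := mul_eq_one_comm.mp hXW
  have hWX' : Wᵀ * X = 1 := by simpa using congrArg transpose hXW
  have hinv : Wᵀ⁻¹ = X := inv_eq_right_inv hWX'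
  have hconj : Y * Wᵀ = W * (Xᵀ * Y) * Wᵀ := by
    rw [← Matrix.mul_assoc, hWX, Matrix.one_mul]
  refine ⟨hconj ▸ hsymm.mul_mul_transpose W, ?_⟩
  rw [MnegAZ_eq_fromBlocks, hinv, Matrix.mul_assoc, hWX', Matrix.mul_one]

end Symplectic

section Conjugation

variable {R : Type*} [CommRing R] {n : ℕ}

lemma isLowerUnitriangular2n_fromBlocks_iff (B C' C D : Matrix (Fin n) (Fin n) R) :
    IsLowerUnitriangular2n (fromBlocks B C' C D) ↔
      C' = 0 ∧ IsUpperUnitriangular Bᵀ ∧ IsUpperUnitriangular Dᵀ := by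
  constructor
  · rintro ⟨hdiag, hlower⟩
    refine ⟨ext fun i j => hlower (.inl i) (.inr j) (by simp [idx]; omega),
      ⟨fun i => hdiag (.inl i), fun i j h => hlower (.inl j) (.inl i) h⟩,
      ⟨fun i => hdiag (.inr i), fun i j h => hlower (.inr j) (.inr i) (by simpa [idx] using h)⟩⟩
  · rintro ⟨rfl, ⟨hB₁, hB₂⟩, ⟨hD₁, hD₂⟩⟩
    refine ⟨Sum.forall.2 ⟨hB₁, hD₁⟩, ?_⟩
    rintro (i | i) (j | j) h <;> simp only [idx, Sum.elim_inl, Sum.elim_inr] at h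
    · exact hB₂ j i h
    · rfl
    · omega
    · exact hD₂ j i (by simpa using h)

lemma Pmat_mul_fromBlocks_mul_Pmat (B C' C D : Matrix (Fin n) (Fin n) R) :
    Pmat n * fromBlocks B C' C D * Pmat n =
      fromBlocks B (C' * Lmat n) (Lmat n * C) (Lmat n * D * Lmat n) := by
  simp [Pmat, fromBlocks_multiply]

lemma Pmat_mul_Omega_mul_Pmat : Pmat n * Omega (Fin n) R * Pmat n = OmegaTilde n := by
  simp [Omega, OmegaTilde, Pmat_mul_fromBlocks_mul_Pmat]

lemma Pmat_transpose : (Pmat n : Matrix (Fin n ⊕ Fin n) (Fin n ⊕ Fin n) R)ᵀ = Pmat n := by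
  simp [Pmat, fromBlocks_transpose, Lmat_transpose]

lemma Pmat_mul_Pmat : (Pmat n : Matrix (Fin n ⊕ Fin n) (Fin n ⊕ Fin n) R) * Pmat n = 1 := by
  simp [Pmat, fromBlocks_multiply, Lmat_mul_Lmat]

lemma Pmat_conj_involutive :
    Function.Involutive fun N : Matrix (Fin n ⊕ Fin n) (Fin n ⊕ Fin n) R => Pmat n * N * Pmat n :=
  fun N => by
    dsimp only
    rw [← Matrix.mul_assoc, ← Matrix.mul_assoc, Pmat_mul_Pmat, Matrix.one_mul, Matrix.mul_assoc,
      Pmat_mul_Pmat, Matrix.mul_one]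

lemma isSymplectic_Pmat_conj_iff (N : Matrix (Fin n ⊕ Fin n) (Fin n ⊕ Fin n) R) :
    (Pmat n * N * Pmat n)ᵀ * OmegaTilde n * (Pmat n * N * Pmat n) = OmegaTilde n ↔
      Nᵀ * Omega (Fin n) R * N = Omega (Fin n) R := by
  have hconj : (Pmat n * N * Pmat n)ᵀ * OmegaTilde n * (Pmat n * N * Pmat n) =
      Pmat n * (Nᵀ * Omega (Fin n) R * N) * Pmat n := by
    have hPP (X : Matrix (Fin n ⊕ Fin n) (Fin n ⊕ Fin n) R) : Pmat n * (Pmat n * X) = X := by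
      rw [← Matrix.mul_assoc, Pmat_mul_Pmat, Matrix.one_mul]
    simp only [← Pmat_mul_Omega_mul_Pmat, transpose_mul, Pmat_transpose, Matrix.mul_assoc, hPP]
  rw [hconj, ← Pmat_mul_Omega_mul_Pmat]
  exact Pmat_conj_involutive.injective.eq_iff

lemma isLowerUnitriangular2n_Pmat_conj_iff (N : Matrix (Fin n ⊕ Fin n) (Fin n ⊕ Fin n) R) :
    IsLowerUnitriangular2n (Pmat n * N * Pmat n) ↔
      N.toBlocks₁₂ = 0 ∧ IsUpperUnitriangular N.toBlocks₁₁ᵀ ∧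
        IsUpperUnitriangular N.toBlocks₂₂ := by
  have hL : N.toBlocks₁₂ * Lmat n = 0 ↔ N.toBlocks₁₂ = 0 :=
    ⟨fun h => by
      rw [← Matrix.mul_one N.toBlocks₁₂, ← Lmat_mul_Lmat, ← Matrix.mul_assoc, h, Matrix.zero_mul],
      fun h => by simp [h]⟩
  rw [← fromBlocks_toBlocks N, Pmat_mul_fromBlocks_mul_Pmat,
    isLowerUnitriangular2n_fromBlocks_iff, Lmat_mul_mul_Lmat, transpose_submatrix,
    isUpperUnitriangular_submatrix_rev_iff, transpose_transpose, hL]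
  simp

end Conjugation

theorem lowerUnitriangular_symplectic_iff_eq_MnegAZ {R : Type*} [CommRing R] {n : ℕ}
    (N : Matrix (Fin n ⊕ Fin n) (Fin n ⊕ Fin n) R) :
    (N.toBlocks₁₂ = 0 ∧ IsUpperUnitriangular N.toBlocks₁₁ᵀ ∧ IsUpperUnitriangular N.toBlocks₂₂) ∧
        Nᵀ * Omega (Fin n) R * N = Omega (Fin n) R ↔
      ∃ A Z : Matrix (Fin n) (Fin n) R, IsUpperUnitriangular A ∧ Z.IsSymm ∧ N = MnegAZ A Z := by
  constructor
  · rintro ⟨⟨h₁₂, -, hW⟩, hN⟩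
    rw [← fromBlocks_toBlocks N, h₁₂] at hN ⊢
    obtain ⟨hZ, hNeq⟩ := eq_MnegAZ_of_isSymplectic hN
    exact ⟨_, _, hW, hZ, hNeq⟩
  · rintro ⟨A, Z, hA, hZ, rfl⟩
    refine ⟨?_, MnegAZ_isSymplectic hA.isUnit_det hZ⟩
    rw [MnegAZ_eq_fromBlocks, toBlocks_fromBlocks₁₁, toBlocks_fromBlocks₁₂, toBlocks_fromBlocks₂₂,
      ← transpose_nonsing_inv, transpose_transpose]
    exact ⟨rfl, hA.inv, hA⟩

theorem stmt12_general {R : Type*} [CommRing R] {n : ℕ}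
    (M : Matrix (Fin n ⊕ Fin n) (Fin n ⊕ Fin n) R) :
    (IsLowerUnitriangular2n M ∧ Mᵀ * OmegaTilde n * M = OmegaTilde n) ↔
      ∃ A Z : Matrix (Fin n) (Fin n) R, IsUpperUnitriangular A ∧ Z.IsSymm ∧
        M = Pmat n * MnegAZ A Z * Pmat n := by
  obtain ⟨N, rfl⟩ : ∃ N, M = Pmat n * N * Pmat n := ⟨_, (Pmat_conj_involutive M).symm⟩
  rw [isLowerUnitriangular2n_Pmat_conj_iff, isSymplectic_Pmat_conj_iff,
    lowerUnitriangular_symplectic_iff_eq_MnegAZ]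
  simp only [Pmat_conj_involutive.injective.eq_iff]

theorem stmt12 {R : Type*} [CommRing R] {n : ℕ} (hn : 1 ≤ n)
    (M : Matrix (Fin n ⊕ Fin n) (Fin n ⊕ Fin n) R) :
    (IsLowerUnitriangular2n M ∧ Mᵀ * OmegaTilde n * M = OmegaTilde n) ↔
      ∃ A Z : Matrix (Fin n) (Fin n) R, IsUpperUnitriangular A ∧ Z.IsSymm ∧
        M = Pmat n * MnegAZ A Z * Pmat n :=
  stmt12_general M
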